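/- Let r ≥ 2 and let a_1 ≤ a_2 ≤ … ≤ a_r and s_1 ≤ s_2 ≤ … ≤ s_r be positive integers with a_1 < s_1 and s_i ≤ a_{i+1} for every 1 ≤ i ≤ r-1. Then there exist constants c₁, c₂ > 0 and n₀ such that for all n ≥ n₀: c₁·n^{a_2 + a_3 + … + a_r} ≤ ex(n, K_{a_1,…,a_r}, K_{s_1,…,s_r}) ≤ c₂·n^{a_2 + a_3 + … + a_r}. -/

import Mathlib

open SimpleGraph

/-- `F` is contained in `G` as a subgraph, i.e. there is an injective graph
homomorphism from `F` to `G`. -/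
def ContainsCopy {α β : Type*} (F : SimpleGraph α) (G : SimpleGraph β) : Prop :=
  ∃ f : F →g G, Function.Injective f

/-- `N(H,G)`: the number of subgraphs of `G` isomorphic to `H`. -/
noncomputable def copyCount {α β : Type*} (H : SimpleGraph α) (G : SimpleGraph β) : ℕ :=
  Nat.card {G' : G.Subgraph // Nonempty (H ≃g G'.coe)}

/-- `ex(n,H,F)`: the maximum number of copies of `H` in an `F`-free graph on `n` vertices. -/
noncomputable def exGen (n : ℕ) {α β : Type*} (H : SimpleGraph α) (F : SimpleGraph β) : ℕ :=
  sSup {m | ∃ G : SimpleGraph (Fin n), ¬ ContainsCopy F G ∧ m = copyCount H G}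

/-- The complete bipartite graph `K_{a,b}`. -/
abbrev Kbip (a b : ℕ) : SimpleGraph (Fin a ⊕ Fin b) := completeBipartiteGraph (Fin a) (Fin b)

/-- `K̄_{a,b}`: obtained from `K_{a,b}` by adding all edges inside the part of size `a`. -/
def KbipBar (a b : ℕ) : SimpleGraph (Fin a ⊕ Fin b) :=
  SimpleGraph.fromRel (fun u _ => u.isLeft)

/-- `k` vertex-disjoint copies of `G`. -/
def disjCopies (k : ℕ) {α : Type*} (G : SimpleGraph α) : SimpleGraph (Fin k × α) :=
  SimpleGraph.fromRel (fun u v => u.1 = v.1 ∧ G.Adj u.2 v.2)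

/-- The vertex-disjoint union of `G` and `H`. -/
def disjSum {α β : Type*} (G : SimpleGraph α) (H : SimpleGraph β) : SimpleGraph (α ⊕ β) :=
  SimpleGraph.fromRel (fun u v =>
    (∃ x y, u = Sum.inl x ∧ v = Sum.inl y ∧ G.Adj x y) ∨
    (∃ x y, u = Sum.inr x ∧ v = Sum.inr y ∧ H.Adj x y))

/-- Placing a graph `G0` on the `Fin b`-part of the vertex set `Fin a ⊕ Fin b`. -/
def liftRight (a : ℕ) {b : ℕ} (G0 : SimpleGraph (Fin b)) : SimpleGraph (Fin a ⊕ Fin b) :=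
  SimpleGraph.fromRel (fun u v => ∃ x y, u = Sum.inr x ∧ v = Sum.inr y ∧ G0.Adj x y)

/-! In a `K_{s₁,…,s_r}`-free graph the vertices outside the first part of a copy of
`K_{a₁,…,a_r}` have fewer than `s_r` common neighbours: otherwise, as `s_i ≤ a_{i+1}`, these
common neighbours and the parts `2, …, r` of the copy would contain `K_{s₁,…,s_r}`. So a copy is
determined by one of at most `n^{a₂+⋯+a_r}` restrictions and `s_r^{a₁}` further choices.

Conversely, the complete `r`-partite graph with a first part of size `a₁ < s₁` and the other
parts of size about `n/(r-1)` contains `∏_{i ≥ 2} (n/(r-1) choose a_i)` copies of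
`K_{a₁,…,a_r}`, and it is `K_{s₁,…,s_r}`-free: no part of a copy of `K_{s₁,…,s_r}` fits into
the first part, so picking a vertex outside it in every part gives `r` vertices with pairwise
distinct colours among the remaining `r - 1`.

Parts are indexed by `Fin (m + 1)`, so `a 0` is `a₁` and `s (Fin.last m)` is `s_r`. -/

open Finset Function

variable {α β ι V : Type*}

namespace SimpleGraph

instance [Finite α] [Finite β] {H : SimpleGraph α} {G : SimpleGraph β} : Finite (Copy H G) :=
  .of_injective _ DFunLike.coe_injective

lemma card_copy_le [Finite α] [Finite β] (H : SimpleGraph α) (G : SimpleGraph β) :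
    Nat.card (Copy H G) ≤ Nat.card β ^ Nat.card α :=
  Nat.card_fun (α := α) (β := β) ▸ Nat.card_le_card_of_injective _ DFunLike.coe_injective

def Copy.ofCompleteMultipartiteGraph {P : ι → Type*} {G : SimpleGraph V} (f : (Σ i, P i) → V)
    (hadj : ∀ p q : Σ i, P i, p.1 ≠ q.1 → G.Adj (f p) (f q))
    (hinj : ∀ i, Injective fun x : P i => f ⟨i, x⟩) :
    Copy (completeMultipartiteGraph P) G where
  toHom := ⟨f, fun h => hadj _ _ h⟩
  injective' := by
    rintro ⟨i, x⟩ ⟨j, y⟩ hxy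
    obtain rfl | hij := eq_or_ne i j
    · rw [hinj i hxy]
    · exact absurd hxy (hadj ⟨i, x⟩ ⟨j, y⟩ hij).ne

def Copy.completeMultipartiteGraphComp {κ : Type*} (P : ι → Type*) {σ : κ → ι}
    (hσ : Injective σ) :
    Copy (completeMultipartiteGraph (P ∘ σ)) (completeMultipartiteGraph P) :=
  .ofCompleteMultipartiteGraph (fun p => ⟨σ p.1, p.2⟩) (fun _ _ h => hσ.ne h)
    (fun _ _ _ h => eq_of_heq (Sigma.mk.inj h).2)

section UpperBound

variable {G : SimpleGraph V} {m : ℕ} {a s : Fin (m + 1) → ℕ}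

lemma card_commonNeighbors_lt [Finite V] (hsa : ∀ k : Fin m, s k.castSucc ≤ a k.succ)
    (hfree : (completeMultipartiteGraph fun i => Fin (s i)).Free G)
    (g : Copy (completeMultipartiteGraph fun k : Fin m => Fin (a k.succ)) G) :
    Nat.card {v // ∀ p, G.Adj v (g p)} < s (Fin.last m) := by
  classical
  have := Fintype.ofFinite V
  by_contra! h
  obtain ⟨e⟩ := Function.Embedding.nonempty_of_card_le
    (α := Fin (s (Fin.last m))) (β := {v // ∀ p, G.Adj v (g p)})
    (by simpa [Nat.card_eq_fintype_card] using h)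
  let f (p : Σ i, Fin (s i)) : V := Fin.lastCases (motive := fun j => Fin (s j) → V)
    (fun x => e x) (fun k x => g ⟨k, Fin.castLE (hsa k) x⟩) p.1 p.2
  refine hfree ⟨Copy.ofCompleteMultipartiteGraph f ?_ ?_⟩
  · rintro ⟨i, x⟩ ⟨j, y⟩ (hij : i ≠ j)
    induction i using Fin.lastCases with
    | last =>
      induction j using Fin.lastCases with
      | last => exact absurd rfl hij
      | cast l => simpa [f] using (e x).2 _
    | cast k =>
      induction j using Fin.lastCases with
      | last => simpa [f] using ((e y).2 _).symm
      | cast l =>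
        simpa [f] using g.toHom.map_adj (v := ⟨k, Fin.castLE (hsa k) x⟩)
          (w := ⟨l, Fin.castLE (hsa l) y⟩) fun h : k = l => hij (h ▸ rfl)
  · intro i
    induction i using Fin.lastCases with
    | last =>
      simp only [f, Fin.lastCases_last]
      exact fun x y h => e.injective (Subtype.val_injective h)
    | cast k =>
      simp only [f, Fin.lastCases_castSucc]
      exact fun x y h =>
        Fin.castLE_injective (hsa k) (eq_of_heq (Sigma.mk.inj (g.injective h)).2)

lemma card_copy_le_of_free [Finite V] (hsa : ∀ k : Fin m, s k.castSucc ≤ a k.succ)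
    (hfree : (completeMultipartiteGraph fun i => Fin (s i)).Free G) :
    Nat.card (Copy (completeMultipartiteGraph fun i => Fin (a i)) G) ≤
      s (Fin.last m) ^ a 0 * Nat.card V ^ ∑ k : Fin m, a k.succ := by
  let K' := completeMultipartiteGraph fun k : Fin m => Fin (a k.succ)
  have := Fintype.ofFinite (Copy K' G)
  let R := Copy.completeMultipartiteGraphComp (fun i => Fin (a i)) (Fin.succ_injective m)
  let Φ (f : Copy (completeMultipartiteGraph fun i => Fin (a i)) G) :
      Σ g : Copy K' G, Fin (a 0) → {v // ∀ p, G.Adj v (g p)} :=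
    ⟨f.comp R, fun x => ⟨f ⟨0, x⟩, fun p => f.toHom.map_adj (Fin.succ_ne_zero p.1).symm⟩⟩
  have hΦ : Injective Φ := by
    intro f₁ f₂ h
    have hg := congrArg Sigma.fst h
    have h₀ := congrArg (fun σ => fun x => (σ.2 x : V)) h
    ext ⟨i, x⟩
    induction i using Fin.cases with
    | zero => exact congrFun h₀ x
    | succ k => exact DFunLike.congr_fun hg ⟨k, x⟩
  calc Nat.card (Copy (completeMultipartiteGraph fun i => Fin (a i)) G)
      ≤ Nat.card (Σ g : Copy K' G, Fin (a 0) → {v // ∀ p, G.Adj v (g p)}) :=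
        Nat.card_le_card_of_injective Φ hΦ
    _ = ∑ g : Copy K' G, Nat.card {v // ∀ p, G.Adj v (g p)} ^ a 0 := by
        simp [Nat.card_sigma, Nat.card_fun]
    _ ≤ ∑ _g : Copy K' G, s (Fin.last m) ^ a 0 :=
        sum_le_sum fun g _ => Nat.pow_le_pow_left (card_commonNeighbors_lt hsa hfree g).le _
    _ ≤ s (Fin.last m) ^ a 0 * Nat.card V ^ ∑ k : Fin m, a k.succ := by
        rw [sum_const, card_univ, ← Nat.card_eq_fintype_card, smul_eq_mul, mul_comm]
        gcongr
        simpa using card_copy_le K' G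

end UpperBound

section LowerBound

variable [Fintype V] [Fintype ι] [DecidableEq ι] (col : V → ι)

lemma free_comap_top_of_card_lt {s : ι → ℕ} {i₀ : ι} (hs : ∀ i, #{v | col v = i₀} < s i) :
    (completeMultipartiteGraph fun i => Fin (s i)).Free ((⊤ : SimpleGraph ι).comap col) := by
  rintro ⟨φ⟩
  have hφ (p q : Σ i, Fin (s i)) (h : p.1 ≠ q.1) : col (φ p) ≠ col (φ q) := by
    simpa using φ.toHom.map_adj h
  have hpart (i : ι) : ∃ x, col (φ ⟨i, x⟩) ≠ i₀ := by
    by_contra! h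
    refine (hs i).not_ge ?_
    simpa using card_le_card_of_injOn (s := univ) (fun x => φ ⟨i, x⟩) (by simp [h])
      (φ.injective.comp sigma_mk_injective).injOn
  choose x hx using hpart
  have := Fintype.card_le_of_injective (fun i => (⟨col (φ ⟨i, x i⟩), hx i⟩ : {j // j ≠ i₀}))
    fun i j h => of_not_not fun hij => hφ ⟨i, x i⟩ ⟨j, x j⟩ hij (congrArg Subtype.val h)
  have : 0 < Fintype.card ι := Fintype.card_pos_iff.2 ⟨i₀⟩
  simp [Fintype.card_subtype_compl] at *
  omega

lemma prod_choose_le_copyCount (a : ι → ℕ) :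
    ∏ i, (#{v | col v = i}).choose (a i) ≤
      _root_.copyCount (completeMultipartiteGraph fun i => Fin (a i))
        ((⊤ : SimpleGraph ι).comap col) := by
  let Choice := Π i, {t // t ∈ powersetCard (a i) {v | col v = i}}
  let f (T : Choice) (p : Σ i, Fin (a i)) : V :=
    (equivFinOfCardEq (mem_powersetCard.1 (T p.1).2).2).symm p.2
  have hf_mem (T : Choice) (p) : f T p ∈ (T p.1).1 := Subtype.coe_prop _
  have hf_col (T : Choice) (p) : col (f T p) = p.1 := by
    simpa using (mem_powersetCard.1 (T p.1).2).1 (hf_mem T p)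
  let c (T : Choice) :=
    Copy.ofCompleteMultipartiteGraph (G := (⊤ : SimpleGraph ι).comap col) (f T)
      (fun p q h => by simpa [hf_col] using h)
      (fun i _ _ h => (Equiv.injective _) (Subtype.val_injective h))
  have hmem (T : Choice) (i : ι) (v : V) : v ∈ (T i).1 ↔ v ∈ Set.range (f T) ∧ col v = i := by
    constructor
    · intro hv
      refine ⟨⟨⟨i, equivFinOfCardEq (mem_powersetCard.1 (T i).2).2 ⟨v, hv⟩⟩, by simp [f]⟩, ?_⟩
      simpa using (mem_powersetCard.1 (T i).2).1 hv
    · rintro ⟨⟨p, rfl⟩, hp⟩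
      obtain rfl : p.1 = i := (hf_col T p).symm.trans hp
      exact hf_mem T p
  let Θ (T : Choice) : {G' : ((⊤ : SimpleGraph ι).comap col).Subgraph //
      Nonempty ((completeMultipartiteGraph fun i => Fin (a i)) ≃g G'.coe)} :=
    ⟨(c T).toSubgraph, ⟨(c T).isoToSubgraph⟩⟩
  have hΘ : Injective Θ := by
    intro T₁ T₂ h
    have hverts : Set.range (f T₁) = Set.range (f T₂) := by
      have := congrArg (fun G' => G'.1.verts) h
      simp only [Θ, Subgraph.map_verts, Subgraph.verts_top, Set.image_univ] at this
      exact this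
    funext i
    ext v
    rw [hmem, hmem, hverts]
  calc ∏ i, (#{v | col v = i}).choose (a i) = Nat.card Choice := by simp [Choice]
    _ ≤ _ := Nat.card_le_card_of_injective Θ hΘ

end LowerBound

end SimpleGraph

lemma containsCopy_iff_isContained {F : SimpleGraph α} {G : SimpleGraph β} :
    ContainsCopy F G ↔ F ⊑ G :=
  ⟨fun ⟨f, hf⟩ => ⟨f.toCopy hf⟩, fun ⟨f⟩ => ⟨f.toHom, f.injective⟩⟩

lemma copyCount_le_card_copy [Finite α] [Finite β] (H : SimpleGraph α) (G : SimpleGraph β) :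
    copyCount H G ≤ Nat.card (Copy H G) := by
  refine Nat.card_le_card_of_surjective (fun f => ⟨f.toSubgraph, ⟨f.isoToSubgraph⟩⟩) ?_
  rintro ⟨G', hG'⟩
  obtain ⟨f, -, hf⟩ := Copy.toSubgraph_surjOn hG'
  exact ⟨f, Subtype.ext hf⟩

lemma le_exGen [Finite α] {n : ℕ} {H : SimpleGraph α} {F : SimpleGraph β}
    {G : SimpleGraph (Fin n)} (hG : F.Free G) : copyCount H G ≤ exGen n H F := by
  refine le_csSup ⟨n ^ Nat.card α, ?_⟩ ⟨G, mt containsCopy_iff_isContained.1 hG, rfl⟩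
  rintro _ ⟨G, -, rfl⟩
  simpa using (copyCount_le_card_copy H G).trans (card_copy_le H G)

lemma exGen_le {n B : ℕ} {H : SimpleGraph α} {F : SimpleGraph β}
    (h : ∀ G : SimpleGraph (Fin n), F.Free G → copyCount H G ≤ B) : exGen n H F ≤ B := by
  refine csSup_le' ?_
  rintro _ ⟨G, hG, rfl⟩
  exact h G (mt containsCopy_iff_isContained.2 hG)

open Nat

/-- The witness is the complete multipartite graph with parts of sizes `c i`, the leftover
vertices joining the part `j₀`. -/
lemma prod_choose_le_exGen [Fintype ι] [DecidableEq ι] {n : ℕ} {a s c : ι → ℕ}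
    {i₀ j₀ : ι} (hj₀ : j₀ ≠ i₀) (hc : ∀ i, c i₀ < s i) (hn : ∑ i, c i ≤ n) :
    ∏ i, (c i).choose (a i) ≤ exGen n (completeMultipartiteGraph fun i => Fin (a i))
      (completeMultipartiteGraph fun i => Fin (s i)) := by
  obtain ⟨ψ⟩ := Function.Embedding.nonempty_of_card_le (α := Σ i, Fin (c i)) (β := Fin n)
    (by simpa using hn)
  let col := extend ψ Sigma.fst fun _ => j₀
  have hcol (p) : col (ψ p) = p.1 := ψ.injective.extend_apply _ _ _
  have hclass (i) : c i ≤ #{v | col v = i} := by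
    simpa using card_le_card_of_injOn (s := univ) (fun x => ψ ⟨i, x⟩) (by simp [hcol])
      (ψ.injective.comp sigma_mk_injective).injOn
  have hclass₀ : #{v | col v = i₀} ≤ c i₀ := by
    refine (card_le_card fun v hv => ?_).trans
      (card_image_le.trans_eq (card_fin _) : #(univ.image fun x => ψ ⟨i₀, x⟩) ≤ c i₀)
    simp only [mem_filter, mem_univ, true_and, mem_image] at hv ⊢
    by_cases h : ∃ p, ψ p = v
    · obtain ⟨⟨i, x⟩, rfl⟩ := h
      obtain rfl : i = i₀ := (hcol _).symm.trans hv
      exact ⟨x, rfl⟩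
    · exact absurd ((extend_apply' _ _ _ h).symm.trans hv) hj₀
  calc ∏ i, (c i).choose (a i) ≤ ∏ i, (#{v | col v = i}).choose (a i) :=
        prod_le_prod' fun i _ => choose_le_choose _ (hclass i)
    _ ≤ _ := prod_choose_le_copyCount col a
    _ ≤ _ := le_exGen (free_comap_top_of_card_lt col fun i => hclass₀.trans_lt (hc i))

lemma pow_div_factorial_le_choose {x : ℝ} {b t : ℕ} (hx : 0 ≤ x) (hxb : x + t ≤ b + 1) :
    x ^ t / t ! ≤ b.choose t := by
  have htb : t ≤ b + 1 := by exact_mod_cast (le_add_of_nonneg_left hx).trans hxb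
  refine le_trans ?_ (pow_le_choose t b)
  gcongr
  rw [Nat.cast_sub htb]
  push_cast
  linarith

section Asymptotics

variable {m : ℕ} {a s : Fin (m + 1) → ℕ}

/-- Take `c = (a 0, b, …, b)` with `b = ⌊(n - a 0) / m⌋`, so that `b ≥ n / (2m) + a i`
once `n ≥ 2 (m + 1) ∑ a`. -/
lemma exists_pow_le_exGen (hm : 0 < m) (hs : Monotone s) (h0 : a 0 < s 0) :
    ∃ c > (0 : ℝ), ∃ n₀ : ℕ, ∀ n ≥ n₀, c * (n : ℝ) ^ ∑ k : Fin m, a k.succ ≤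
      exGen n (completeMultipartiteGraph fun i => Fin (a i))
        (completeMultipartiteGraph fun i => Fin (s i)) := by
  set A := ∑ i, a i
  refine ⟨∏ k : Fin m, (1 / (2 * m : ℝ)) ^ a k.succ / (a k.succ)!, by positivity,
    2 * (m + 1) * A, fun n hn => ?_⟩
  set b := (n - a 0) / m
  have ha (i) : a i ≤ A := single_le_sum (fun _ _ => Nat.zero_le _) (mem_univ i)
  have hAn : A ≤ n := (Nat.le_mul_of_pos_left A (by positivity)).trans hn
  have hb : a 0 + m * b ≤ n := by
    have : m * b ≤ n - a 0 := Nat.mul_div_le _ _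
    have := ha 0
    omega
  have hx (t) (ht : t ≤ A) : (n : ℝ) / (2 * m) + t ≤ b + 1 := by
    have : n - a 0 < m * (b + 1) := lt_mul_div_succ _ hm
    have : m * t ≤ m * A := Nat.mul_le_mul_left _ ht
    have : n + 2 * m * t ≤ 2 * m * (b + 1) := by
      zify [(ha 0).trans hAn] at *
      nlinarith [ha 0]
    have : (n : ℝ) + 2 * m * t ≤ 2 * m * (b + 1) := by exact_mod_cast this
    rw [div_add' _ _ _ (by positivity), div_le_iff₀ (by positivity)]
    linarith
  let c : Fin (m + 1) → ℕ := Fin.cons (a 0) fun _ => b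
  calc (∏ k : Fin m, (1 / (2 * m : ℝ)) ^ a k.succ / (a k.succ)!) *
        (n : ℝ) ^ ∑ k : Fin m, a k.succ
      = ∏ k : Fin m, ((n : ℝ) / (2 * m)) ^ a k.succ / (a k.succ)! := by
        rw [← prod_pow_eq_pow_sum, ← prod_mul_distrib]
        congr! 1 with k
        ring
    _ ≤ ∏ k : Fin m, (b.choose (a k.succ) : ℝ) :=
        prod_le_prod (fun _ _ => by positivity)
          fun k _ => pow_div_factorial_le_choose (by positivity) (hx _ (ha _))
    _ = ((∏ i, (c i).choose (a i) : ℕ) : ℝ) := by simp [c, Fin.prod_univ_succ]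
    _ ≤ _ := by
        refine Nat.cast_le.2 (prod_choose_le_exGen (Fin.succ_ne_zero ⟨m - 1, by omega⟩)
          (fun i => h0.trans_le (hs (Fin.zero_le i))) ?_)
        simpa [c, Fin.sum_univ_succ] using hb

lemma exGen_le_pow (hsa : ∀ k : Fin m, s k.castSucc ≤ a k.succ) (n : ℕ) :
    exGen n (completeMultipartiteGraph fun i => Fin (a i))
        (completeMultipartiteGraph fun i => Fin (s i)) ≤
      s (Fin.last m) ^ a 0 * n ^ ∑ k : Fin m, a k.succ :=
  exGen_le fun G hG => (copyCount_le_card_copy _ G).trans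
    (by simpa using card_copy_le_of_free hsa hG)

end Asymptotics

/-- let `r ≥ 2`, `a₁ ≤ … ≤ a_r`, `s₁ ≤ … ≤ s_r` positive, `a₁ < s₁`, and
`s_i ≤ a_{i+1}` for all `i < r`. Then `ex(n, K_{a₁,…,a_r}, K_{s₁,…,s_r}) = Θ(n^{a₂+⋯+a_r})`. -/
theorem stmt17 (r : ℕ) (hr : 2 ≤ r) (a s : Fin r → ℕ)
    (hsmono : Monotone s)
    (h0 : a ⟨0, by omega⟩ < s ⟨0, by omega⟩)
    (hconsec : ∀ i : Fin r, ∀ h : i.val + 1 < r, s i ≤ a ⟨i.val + 1, h⟩) :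
    ∃ (c₁ c₂ : ℝ) (n₀ : ℕ), 0 < c₁ ∧ 0 < c₂ ∧ ∀ n ≥ n₀,
      c₁ * (n : ℝ) ^ ((∑ i, a i) - a ⟨0, by omega⟩) ≤
        (exGen n (completeMultipartiteGraph (fun i => Fin (a i)))
          (completeMultipartiteGraph (fun i => Fin (s i))) : ℝ) ∧
      (exGen n (completeMultipartiteGraph (fun i => Fin (a i)))
          (completeMultipartiteGraph (fun i => Fin (s i))) : ℝ) ≤
        c₂ * (n : ℝ) ^ ((∑ i, a i) - a ⟨0, by omega⟩) := by
  obtain ⟨m, rfl⟩ : ∃ m, r = m + 1 := ⟨r - 1, by omega⟩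
  have hsa (k : Fin m) : s k.castSucc ≤ a k.succ := hconsec k.castSucc (by simp)
  simp only [Fin.zero_eta, Fin.sum_univ_succ, Nat.add_sub_cancel_left] at h0 ⊢
  have hs_last : 0 < s (Fin.last m) :=
    (Nat.zero_le _).trans_lt (h0.trans_le (hsmono (Fin.zero_le _)))
  obtain ⟨c₁, hc₁, n₀, hlower⟩ := exists_pow_le_exGen (by omega) hsmono h0
  refine ⟨c₁, s (Fin.last m) ^ a 0, n₀, hc₁, by positivity, fun n hn => ⟨hlower n hn, ?_⟩⟩
  exact_mod_cast exGen_le_pow hsa n
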